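/- Let B = ⟨a, b ∣ a b a⁻¹ b = 1⟩ be the Klein bottle group, let G be a torsion-free group, and let f : B → G be a group homomorphism with nontrivial kernel. Then the image of f is cyclic: there exists g ∈ G such that the range of f equals the subgroup generated by g (in particular the image is trivial or infinite cyclic). -/

import Mathlib

/-- The single relator `a * b * a⁻¹ * b` of the Klein bottle group,
where `a = FreeGroup.of 0` and `b = FreeGroup.of 1`. -/
def kleinBottleRels : Set (FreeGroup (Fin 2)) :=
  {FreeGroup.of 0 * FreeGroup.of 1 * (FreeGroup.of 0)⁻¹ * FreeGroup.of 1}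

/-- The Klein bottle group `B = ⟨a, b ∣ a b a⁻¹ b = 1⟩`. -/
abbrev KleinBottleGroup : Type := PresentedGroup kleinBottleRels

/-- The generator `a` of the Klein bottle group. -/
def kleinA : KleinBottleGroup := PresentedGroup.of 0

/-- The generator `b` of the Klein bottle group. -/
def kleinB : KleinBottleGroup := PresentedGroup.of 1

/-!
Conjugation by `a` inverts `b`, so every element of the Klein bottle group is `a ^ m * b ^ n`,
and the same holds in the image of any homomorphism `f`. If neither `f a` nor `f b` is trivial in a
torsion-free group, then `f (a ^ m * b ^ n) = 1` forces, after conjugating by `f a`,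
`f b ^ n = f b ^ (-n)`, hence `n = 0` and then `m = 0`: such an `f` is injective. So a
non-injective `f` kills one generator, and its image is generated by the other.
-/

section InvertingConjugation

variable {H : Type*} [Group H] {x y : H}

theorem conj_zpow_eq_zpow_neg_of_conj_eq_inv (h : x * y * x⁻¹ = y⁻¹) (n : ℤ) :
    x * y ^ n * x⁻¹ = y ^ (-n) := by
  rw [← conj_zpow, h, inv_zpow, zpow_neg]

theorem exists_zpow_mul_zpow_eq_zpow_mul_zpow_of_conj_eq_inv (h : x * y * x⁻¹ = y⁻¹) (j m : ℤ) :
    ∃ k : ℤ, y ^ j * x ^ m = x ^ m * y ^ k := by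
  induction m using Int.induction_on with
  | zero => exact ⟨j, by simp⟩
  | succ m ih =>
    obtain ⟨k, hk⟩ := ih
    refine ⟨-k, ?_⟩
    have hconj := conj_zpow_eq_zpow_neg_of_conj_eq_inv h (-k)
    rw [neg_neg] at hconj
    rw [zpow_add_one, ← mul_assoc, hk, ← hconj]
    group
  | pred m ih =>
    obtain ⟨k, hk⟩ := ih
    refine ⟨-k, ?_⟩
    have hconj := conj_zpow_eq_zpow_neg_of_conj_eq_inv h k
    rw [zpow_sub_one, ← mul_assoc, hk, ← hconj]
    group

theorem exists_eq_zpow_mul_zpow_of_mem_closure_pair (h : x * y * x⁻¹ = y⁻¹) {z : H}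
    (hz : z ∈ Subgroup.closure {x, y}) : ∃ m n : ℤ, z = x ^ m * y ^ n := by
  have hmul : ∀ j m n : ℤ, ∃ m' n' : ℤ, y ^ j * (x ^ m * y ^ n) = x ^ m' * y ^ n' := by
    intro j m n
    obtain ⟨k, hk⟩ := exists_zpow_mul_zpow_eq_zpow_mul_zpow_of_conj_eq_inv h j m
    exact ⟨m, k + n, by rw [← mul_assoc, hk, zpow_add, mul_assoc]⟩
  induction hz using Subgroup.closure_induction_left with
  | one => exact ⟨0, 0, by simp⟩
  | mul_left w hw z _ ih =>
    obtain ⟨m, n, rfl⟩ := ih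
    rcases hw with rfl | rfl
    · exact ⟨m + 1, n, by group⟩
    · simpa only [zpow_one] using hmul 1 m n
  | inv_mul_cancel w hw z _ ih =>
    obtain ⟨m, n, rfl⟩ := ih
    rcases hw with rfl | rfl
    · exact ⟨m - 1, n, by group⟩
    · simpa only [zpow_neg_one] using hmul (-1) m n

theorem eq_zero_of_zpow_mul_zpow_eq_one_of_conj_eq_inv (htf : ∀ g : H, IsOfFinOrder g → g = 1)
    (h : x * y * x⁻¹ = y⁻¹) (hx : x ≠ 1) (hy : y ≠ 1) {m n : ℤ} (hmn : x ^ m * y ^ n = 1) :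
    m = 0 ∧ n = 0 := by
  have hzero : ∀ {g : H} {k : ℤ}, g ≠ 1 → g ^ k = 1 → k = 0 := fun hg hk =>
    by_contra fun hk0 => hg (htf _ (isOfFinOrder_iff_zpow_eq_one.2 ⟨_, hk0, hk⟩))
  have hxm : x ^ m = y ^ (-n) := by
    rw [zpow_neg]
    exact eq_inv_of_mul_eq_one_left hmn
  have hxm' : x ^ m = y ^ n := by
    calc x ^ m = x * x ^ m * x⁻¹ := by group
      _ = y ^ n := by rw [hxm, conj_zpow_eq_zpow_neg_of_conj_eq_inv h, neg_neg]
  have hn : n = 0 := by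
    have h2n : y ^ (n - -n) = 1 := by rw [zpow_sub, ← hxm, ← hxm', mul_inv_cancel]
    have := hzero hy h2n
    omega
  subst hn
  exact ⟨hzero hx (by simpa using hmn), rfl⟩

end InvertingConjugation

theorem kleinA_mul_kleinB_mul_inv : kleinA * kleinB * kleinA⁻¹ = kleinB⁻¹ := by
  refine eq_inv_of_mul_eq_one_left ?_
  exact PresentedGroup.one_of_mem (rels := kleinBottleRels) rfl

theorem closure_kleinA_kleinB : Subgroup.closure {kleinA, kleinB} = ⊤ := by
  rw [← PresentedGroup.closure_range_of kleinBottleRels]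
  congr 1
  ext x
  simp [Fin.exists_fin_two, kleinA, kleinB, eq_comm]

theorem KleinBottleGroup.exists_eq_zpow_mul_zpow (x : KleinBottleGroup) :
    ∃ m n : ℤ, x = kleinA ^ m * kleinB ^ n :=
  exists_eq_zpow_mul_zpow_of_mem_closure_pair kleinA_mul_kleinB_mul_inv
    (closure_kleinA_kleinB ▸ Subgroup.mem_top x)

theorem KleinBottleGroup.range_eq_closure {G : Type*} [Group G] (f : KleinBottleGroup →* G) :
    f.range = Subgroup.closure {f kleinA, f kleinB} := by
  rw [f.range_eq_map, ← closure_kleinA_kleinB, f.map_closure, Set.image_pair]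

/-- If `G` is torsion-free and `f : B → G` is a homomorphism from the Klein bottle
group with nontrivial kernel, then the image of `f` is cyclic. -/
theorem kleinBottle_noninjective_image_cyclic {G : Type*} [Group G]
    (hG : ∀ g : G, ∀ n : ℕ, 0 < n → g ^ n = 1 → g = 1)
    (f : KleinBottleGroup →* G)
    (hf : ∃ x : KleinBottleGroup, x ≠ 1 ∧ f x = 1) :
    ∃ g : G, Set.range f = (Subgroup.zpowers g : Set G) := by
  obtain ⟨x, hx, hfx⟩ := hf
  have htf : ∀ g : G, IsOfFinOrder g → g = 1 := fun g hg =>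
    let ⟨n, hn, hgn⟩ := hg.exists_pow_eq_one
    hG g n hn hgn
  have hrel : f kleinA * f kleinB * (f kleinA)⁻¹ = (f kleinB)⁻¹ := by
    simpa only [map_mul, map_inv] using congrArg f kleinA_mul_kleinB_mul_inv
  have hgen : f kleinA = 1 ∨ f kleinB = 1 := by
    by_contra! hne
    obtain ⟨m, n, rfl⟩ := KleinBottleGroup.exists_eq_zpow_mul_zpow x
    obtain ⟨rfl, rfl⟩ := eq_zero_of_zpow_mul_zpow_eq_one_of_conj_eq_inv htf hrel hne.1 hne.2
      (by simpa only [map_mul, map_zpow] using hfx)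
    simp at hx
  rw [← f.coe_range, KleinBottleGroup.range_eq_closure]
  rcases hgen with h | h
  · exact ⟨f kleinB, by rw [h, Subgroup.closure_insert_one, Subgroup.zpowers_eq_closure]⟩
  · exact ⟨f kleinA, by rw [h, Set.pair_comm, Subgroup.closure_insert_one,
      Subgroup.zpowers_eq_closure]⟩
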